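/- arXiv:2510.03036 — 9 statements merged into one kernel-verified Lean document; each statement's English description precedes it below -/
import Mathlib

section
/- Let n and w_1, …, w_n be positive integers and set d_w := lcm(w_1, …, w_n). Let R be a commutative ℕ-graded ring that is generated over its degree-zero part R_0 by n homogeneous elements f_1, …, f_n of degrees w_1, …, w_n respectively. Then for every integer k ≥ 2, if the ((k−1)d_w)-th Veronese subring R^{((k−1)d_w)} is not generated over R_0 in degree 1, then there exists a w-bubble u with w·u ≥ k·d_w. In particular, if there are no w-bubbles, then R^{(d_w)} is generated over R_0 in degree 1. -/
/-
If no bubble has weight at least `k d` (with `d = d_w`), then every exponent vector `u` with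
`w · u ≥ k d` dominates a vector of weight exactly `d`. Removing such pieces one at a time
shows that a vector of weight `(k - 1) d · m` splits into `m` vectors of weight `(k - 1) d`.
Since every homogeneous element of `R` is a sum of monomials `a ∏ fᵢ ^ uᵢ` (`a ∈ R₀`) of its
own degree, splitting the exponent vector factors each monomial of degree `(k - 1) d · m` into
`m` factors of degree `(k - 1) d`.
-/

/-- The weighted dot product `w · u = ∑ i, w i * u i`. -/
def dotW {n : ℕ} (w u : Fin n → ℕ) : ℕ := ∑ i, w i * u i

/-- `d_w`, the least common multiple of the weights. -/
def lcmW {n : ℕ} (w : Fin n → ℕ) : ℕ := Finset.univ.lcm w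

/-- `u` is a `w`-bubble: `w · u ≥ 2 d_w` and there is no `v ⪯ u` with `w · v = d_w`. -/
def IsBubble {n : ℕ} (w u : Fin n → ℕ) : Prop :=
  2 * lcmW w ≤ dotW w u ∧
    ¬ ∃ v : Fin n → ℕ, (∀ i, v i ≤ u i) ∧ dotW w v = lcmW w

/-- The `r`-th Veronese subring of the graded ring `𝒜` is generated over `𝒜 0` in
degree `1`: for every `m ≥ 1`, every element of `𝒜 (r * m)` is a sum of products of
`m` elements of `𝒜 r`. -/
def VeroneseGenInDegOne {R : Type*} [CommRing R] (𝒜 : ℕ → AddSubgroup R) (r : ℕ) : Prop :=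
  ∀ m : ℕ, 1 ≤ m → ∀ x ∈ 𝒜 (r * m), x ∈ AddSubgroup.closure
    { y : R | ∃ g : Fin m → R, (∀ j, g j ∈ 𝒜 r) ∧ y = ∏ j, g j }

section Combinatorics

variable {n : ℕ} (w : Fin n → ℕ)

lemma dotW_add (u v : Fin n → ℕ) : dotW w (u + v) = dotW w u + dotW w v := by
  simp only [dotW, Pi.add_apply, Nat.mul_add, Finset.sum_add_distrib]

lemma dotW_sub {u v : Fin n → ℕ} (h : v ≤ u) : dotW w (u - v) = dotW w u - dotW w v := by
  have := dotW_add w (u - v) v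
  rw [tsub_add_cancel_of_le h] at this
  omega

variable {w} {d k : ℕ}

lemma exists_le_dotW_eq_mul
    (H : ∀ u : Fin n → ℕ, (k + 1) * d ≤ dotW w u → ∃ v ≤ u, dotW w v = d) (j : ℕ) :
    ∀ u : Fin n → ℕ, (k + j) * d ≤ dotW w u → ∃ v ≤ u, dotW w v = j * d := by
  induction j with
  | zero => exact fun u _ => ⟨0, fun _ => Nat.zero_le _, by simp [dotW]⟩
  | succ j ih =>
    intro u hu
    obtain ⟨v, hvu, hv⟩ := H u ((Nat.mul_le_mul_right d (by omega)).trans hu)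
    have hrest : (k + j) * d ≤ dotW w (u - v) := by
      rw [dotW_sub w hvu, hv]
      have : (k + (j + 1)) * d = (k + j) * d + d := by ring
      omega
    obtain ⟨c, hcu, hc⟩ := ih (u - v) hrest
    refine ⟨c + v, ?_, by rw [dotW_add, hc, hv]; ring⟩
    calc c + v ≤ u - v + v := add_le_add_left hcu v
      _ = u := tsub_add_cancel_of_le hvu

lemma exists_sum_eq_of_dotW_eq
    (H : ∀ u : Fin n → ℕ, (k + 1) * d ≤ dotW w u → ∃ v ≤ u, dotW w v = d) (m : ℕ) :
    ∀ u : Fin n → ℕ, dotW w u = k * d * (m + 1) →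
      ∃ V : Fin (m + 1) → Fin n → ℕ, (∀ j, dotW w (V j) = k * d) ∧ ∑ j, V j = u := by
  induction m with
  | zero => exact fun u hu => ⟨fun _ => u, fun _ => by simpa using hu, by simp⟩
  | succ m ih =>
    intro u hu
    obtain ⟨c, hcu, hc⟩ := exists_le_dotW_eq_mul H k u (by rw [hu]; nlinarith)
    have hrest : dotW w (u - c) = k * d * (m + 1) := by
      rw [dotW_sub w hcu, hc, hu]
      have : k * d * (m + 1 + 1) = k * d * (m + 1) + k * d := by ring
      omega
    obtain ⟨V, hV, hVu⟩ := ih (u - c) hrest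
    refine ⟨Fin.cons c V, Fin.cases (by simpa using hc) (by simpa using hV), ?_⟩
    rw [Fin.sum_univ_succ, Fin.cons_zero]
    simp only [Fin.cons_succ, hVu, add_tsub_cancel_of_le hcu]

end Combinatorics

section Graded

variable {R : Type*} [CommRing R] (𝒜 : ℕ → AddSubgroup R) [GradedRing 𝒜]
variable {n : ℕ} {w : Fin n → ℕ} {f : Fin n → R}

def gradedMonomials (f : Fin n → R) : Submonoid R where
  carrier := {y | ∃ a ∈ 𝒜 0, ∃ u : Fin n → ℕ, y = a * ∏ i, f i ^ u i}
  mul_mem' := by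
    rintro _ _ ⟨a, ha, u, rfl⟩ ⟨b, hb, v, rfl⟩
    refine ⟨a * b, by simpa using SetLike.mul_mem_graded ha hb, u + v, ?_⟩
    simp only [Pi.add_apply, pow_add, Finset.prod_mul_distrib]
    ring
  one_mem' := ⟨1, SetLike.GradedOne.one_mem, 0, by simp⟩

lemma mem_addClosure_gradedMonomials
    (hgen : Subring.closure ((𝒜 0 : Set R) ∪ Set.range f) = ⊤) (x : R) :
    x ∈ AddSubgroup.closure (gradedMonomials 𝒜 f : Set R) := by
  have hx : x ∈ Subring.closure ((𝒜 0 : Set R) ∪ Set.range f) := hgen ▸ Subring.mem_top x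
  refine AddSubgroup.closure_mono ?_ (Subring.mem_closure_iff.mp hx)
  refine Submonoid.closure_le.mpr ?_
  rintro y (hy | ⟨i, rfl⟩)
  · exact ⟨y, hy, 0, by simp⟩
  · exact ⟨1, SetLike.GradedOne.one_mem, Pi.single i 1, by simp [Pi.single_apply]⟩

lemma monomial_mem_graded (hf : ∀ i, f i ∈ 𝒜 (w i)) {a : R} (ha : a ∈ 𝒜 0)
    (u : Fin n → ℕ) : a * ∏ i, f i ^ u i ∈ 𝒜 (dotW w u) := by
  have hprod := SetLike.prod_pow_mem_graded 𝒜 w f u (F := Finset.univ) fun i _ => hf i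
  simpa [dotW, mul_comm] using SetLike.mul_mem_graded ha hprod

lemma mem_addClosure_monomials_of_mem (hf : ∀ i, f i ∈ 𝒜 (w i))
    (hgen : Subring.closure ((𝒜 0 : Set R) ∪ Set.range f) = ⊤) {N : ℕ} {x : R}
    (hx : x ∈ 𝒜 N) :
    x ∈ AddSubgroup.closure
      {y | ∃ a ∈ 𝒜 0, ∃ u : Fin n → ℕ, dotW w u = N ∧ y = a * ∏ i, f i ^ u i} := by
  rw [← DirectSum.decompose_of_mem_same 𝒜 hx, ← GradedRing.proj_apply]
  have hmap := AddSubgroup.mem_map_of_mem (GradedRing.proj 𝒜 N)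
    (mem_addClosure_gradedMonomials 𝒜 hgen x)
  rw [AddMonoidHom.map_closure] at hmap
  refine AddSubgroup.closure_le _ |>.mpr ?_ hmap
  rintro _ ⟨_, ⟨a, ha, u, rfl⟩, rfl⟩
  have hmon := monomial_mem_graded 𝒜 hf ha u
  by_cases hu : dotW w u = N
  · rw [GradedRing.proj_apply, DirectSum.decompose_of_mem_same 𝒜 (hu ▸ hmon)]
    exact AddSubgroup.subset_closure ⟨a, ha, u, hu, rfl⟩
  · rw [GradedRing.proj_apply, DirectSum.decompose_of_mem_ne 𝒜 hmon hu]
    exact zero_mem _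

lemma veroneseGenInDegOne_of_forall_exists_le (hf : ∀ i, f i ∈ 𝒜 (w i))
    (hgen : Subring.closure ((𝒜 0 : Set R) ∪ Set.range f) = ⊤) {d k : ℕ}
    (H : ∀ u : Fin n → ℕ, (k + 1) * d ≤ dotW w u → ∃ v ≤ u, dotW w v = d) :
    VeroneseGenInDegOne 𝒜 (k * d) := by
  rintro _ hm x hx
  obtain ⟨m, rfl⟩ : ∃ m', _ = m' + 1 := ⟨_ - 1, (Nat.sub_add_cancel hm).symm⟩
  refine AddSubgroup.closure_le _ |>.mpr ?_ (mem_addClosure_monomials_of_mem 𝒜 hf hgen hx)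
  rintro _ ⟨a, ha, u, hu, rfl⟩
  obtain ⟨V, hV, rfl⟩ := exists_sum_eq_of_dotW_eq H m u hu
  refine AddSubgroup.subset_closure
    ⟨fun j => (if j = 0 then a else 1) * ∏ i, f i ^ V j i, fun j => ?_, ?_⟩
  · have hcoeff : (if j = 0 then a else 1) ∈ 𝒜 0 := by
      split_ifs
      exacts [ha, SetLike.GradedOne.one_mem]
    simpa only [hV j] using monomial_mem_graded 𝒜 hf hcoeff (V j)
  · simp only [Finset.prod_mul_distrib, Finset.prod_ite_eq', Finset.mem_univ, if_true,
      Finset.sum_apply, ← Finset.prod_pow_eq_pow_sum]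
    rw [Finset.prod_comm]

end Graded

theorem nongeneration_implies_bubble_general {R : Type*} [CommRing R] (𝒜 : ℕ → AddSubgroup R)
    [GradedRing 𝒜] {n : ℕ} (w : Fin n → ℕ)
    (f : Fin n → R) (hf : ∀ i, f i ∈ 𝒜 (w i))
    (hgen : Subring.closure ((𝒜 0 : Set R) ∪ Set.range f) = ⊤) :
    (∀ k : ℕ, 2 ≤ k → ¬ VeroneseGenInDegOne 𝒜 ((k - 1) * lcmW w) →
        ∃ u : Fin n → ℕ, IsBubble w u ∧ k * lcmW w ≤ dotW w u) ∧
      ((¬ ∃ u : Fin n → ℕ, IsBubble w u) → VeroneseGenInDegOne 𝒜 (lcmW w)) := by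
  have key : ∀ k : ℕ, 2 ≤ k → ¬ VeroneseGenInDegOne 𝒜 ((k - 1) * lcmW w) →
      ∃ u : Fin n → ℕ, IsBubble w u ∧ k * lcmW w ≤ dotW w u := by
    intro k hk hver
    by_contra! hno
    obtain ⟨k, rfl⟩ : ∃ j, k = j + 1 := ⟨k - 1, by omega⟩
    refine hver (veroneseGenInDegOne_of_forall_exists_le 𝒜 hf hgen fun u hu => ?_)
    by_contra hsub
    exact (hno u ⟨(Nat.mul_le_mul_right _ hk).trans hu, hsub⟩).not_ge hu
  refine ⟨key, fun hnone => by_contra fun hver => hnone ?_⟩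
  obtain ⟨u, hu, -⟩ := key 2 le_rfl (by simpa using hver)
  exact ⟨u, hu⟩

theorem nongeneration_implies_bubble {R : Type*} [CommRing R] (𝒜 : ℕ → AddSubgroup R)
    [GradedRing 𝒜] {n : ℕ} (hn : 0 < n) (w : Fin n → ℕ) (hw : ∀ i, 0 < w i)
    (f : Fin n → R) (hf : ∀ i, f i ∈ 𝒜 (w i))
    (hgen : Subring.closure ((𝒜 0 : Set R) ∪ Set.range f) = ⊤) :
    (∀ k : ℕ, 2 ≤ k → ¬ VeroneseGenInDegOne 𝒜 ((k - 1) * lcmW w) →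
        ∃ u : Fin n → ℕ, IsBubble w u ∧ k * lcmW w ≤ dotW w u) ∧
      ((¬ ∃ u : Fin n → ℕ, IsBubble w u) → VeroneseGenInDegOne 𝒜 (lcmW w)) :=
  nongeneration_implies_bubble_general 𝒜 w f hf hgen
end

section
/- Let n and w_1, …, w_n be positive integers, set d_w := lcm(w_1, …, w_n), let Q be a nonzero commutative ring, and let R = Q[x_1, …, x_n] be the polynomial ring graded by the weighted degree with deg(x_i) = w_i. Then the Veronese subring R^{(d_w)} is generated over R_0 = Q in degree 1 if and only if there is no w-bubble u with d_w dividing w·u. (Equivalently: every monomial whose weighted degree is a multiple k·d_w with k ≥ 2 is a product of k monomials of weighted degree d_w if and only if no w-bubble u satisfies d_w ∣ w·u.) -/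
open MvPolynomial Finsupp

section Products

variable {σ R M : Type*} [CommSemiring R] [AddCommMonoid M]

variable (R) in
def weightedProducts (w : σ → M) (d : M) (m : ℕ) : Set (MvPolynomial σ R) :=
  {y | ∃ g : Fin m → MvPolynomial σ R, (∀ j, g j ∈ weightedHomogeneousSubmodule R w d) ∧
    y = ∏ j, g j}

theorem monomial_sum_mem_weightedProducts {w : σ → M} {d : M} {m : ℕ}
    (a : Fin (m + 1) → σ →₀ ℕ) (ha : ∀ j, weight w (a j) = d) (c : R) :
    monomial (∑ j, a j) c ∈ weightedProducts R w d (m + 1) := by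
  classical
  refine ⟨fun j => monomial (a j) (if j = 0 then c else 1),
    fun j => isWeightedHomogeneous_monomial _ _ _ (ha j), ?_⟩
  rw [← monomial_sum_prod, Finset.prod_ite_eq']
  simp

theorem coeff_mul_eq_zero_of_forall_le {w : σ → M} {d : M} {p : MvPolynomial σ R}
    (hp : IsWeightedHomogeneous w p d) (q : MvPolynomial σ R) {U : σ →₀ ℕ}
    (hU : ∀ V ≤ U, weight w V ≠ d) : coeff U (p * q) = 0 := by
  classical
  rw [coeff_mul]
  refine Finset.sum_eq_zero fun ⟨a, b⟩ hab => ?_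
  rw [Finset.HasAntidiagonal.mem_antidiagonal] at hab
  rw [hp.coeff_eq_zero a (hU a (hab ▸ le_self_add)), zero_mul]

end Products

section Bubbles

variable {n : ℕ} (w : Fin n → ℕ)

theorem weight_eq_dotW (U : Fin n →₀ ℕ) : weight w U = dotW w U := by
  rw [weight_apply, sum_fintype _ _ fun _ => zero_smul ℕ (w _)]
  simp [dotW, mul_comm]

variable {w}

theorem IsBubble.lcmW_pos {u : Fin n → ℕ} (hu : IsBubble w u) : 0 < lcmW w :=
  Nat.pos_of_ne_zero fun h0 => hu.2 ⟨0, fun _ => Nat.zero_le _, by simp [dotW, h0]⟩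

theorem IsBubble.two_le_of_dotW_eq {u : Fin n → ℕ} (hu : IsBubble w u) {k : ℕ}
    (hk : dotW w u = lcmW w * k) : 2 ≤ k := by
  have := hu.1
  rw [hk, mul_comm] at this
  exact Nat.le_of_mul_le_mul_left this hu.lcmW_pos

theorem IsBubble.coeff_prod_eq_zero {Q : Type*} [CommSemiring Q] {U : Fin n →₀ ℕ}
    (hU : IsBubble w U) {k : ℕ} (g : Fin (k + 1) → MvPolynomial (Fin n) Q)
    (hg : ∀ j, g j ∈ weightedHomogeneousSubmodule Q w (lcmW w)) : coeff U (∏ j, g j) = 0 := by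
  rw [Fin.prod_univ_succ]
  refine coeff_mul_eq_zero_of_forall_le (hg 0) _ fun V hVU hV => hU.2 ⟨V, hVU, ?_⟩
  rw [← weight_eq_dotW, hV]

theorem IsBubble.coeff_eq_zero_of_mem_closure {Q : Type*} [CommRing Q] {U : Fin n →₀ ℕ}
    (hU : IsBubble w U) {k : ℕ} {x : MvPolynomial (Fin n) Q}
    (hx : x ∈ AddSubgroup.closure (weightedProducts Q w (lcmW w) (k + 1))) : coeff U x = 0 := by
  refine (AddSubgroup.closure_le (coeffAddMonoidHom U).ker).2 ?_ hx
  rintro _ ⟨g, hg, rfl⟩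
  exact hU.coeff_prod_eq_zero g hg

variable (hnb : ¬ ∃ u : Fin n → ℕ, IsBubble w u ∧ lcmW w ∣ dotW w u)
include hnb

theorem exists_le_weight_eq_lcmW_of_not_bubble {U : Fin n →₀ ℕ} {m : ℕ}
    (hU : weight w U = lcmW w * (m + 2)) : ∃ V ≤ U, weight w V = lcmW w := by
  by_contra hV
  refine hnb ⟨U, ⟨?_, fun ⟨v, hvU, hv⟩ => hV ⟨equivFunOnFinite.symm v, hvU, ?_⟩⟩, ?_⟩
  · rw [← weight_eq_dotW, hU]
    nlinarith
  · rwa [weight_eq_dotW]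
  · rw [← weight_eq_dotW, hU]
    exact dvd_mul_right _ _

theorem exists_sum_eq_of_not_bubble :
    ∀ (m : ℕ) (U : Fin n →₀ ℕ), weight w U = lcmW w * (m + 1) →
      ∃ a : Fin (m + 1) → Fin n →₀ ℕ, (∀ j, weight w (a j) = lcmW w) ∧ ∑ j, a j = U
  | 0, U, hU => ⟨fun _ => U, fun _ => by simpa using hU, by simp⟩
  | m + 1, U, hU => by
    obtain ⟨V, hVU, hV⟩ := exists_le_weight_eq_lcmW_of_not_bubble hnb hU
    have hrest : weight w (U - V) = lcmW w * (m + 1) := by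
      have := congrArg (weight w) (tsub_add_cancel_of_le hVU)
      rw [map_add, hV, hU] at this
      linarith
    obtain ⟨a, ha, hsum⟩ := exists_sum_eq_of_not_bubble m (U - V) hrest
    refine ⟨Fin.cons V a, Fin.cases hV ha, ?_⟩
    rw [Fin.sum_univ_succ]
    simp [hsum, add_tsub_cancel_of_le hVU]

theorem mem_closure_weightedProducts_of_not_bubble {Q : Type*} [CommRing Q] {m : ℕ}
    {x : MvPolynomial (Fin n) Q} (hx : x ∈ weightedHomogeneousSubmodule Q w (lcmW w * (m + 1))) :
    x ∈ AddSubgroup.closure (weightedProducts Q w (lcmW w) (m + 1)) := by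
  rw [← support_sum_monomial_coeff x]
  refine AddSubgroup.sum_mem _ fun U hU => AddSubgroup.subset_closure ?_
  obtain ⟨a, ha, rfl⟩ :=
    exists_sum_eq_of_not_bubble hnb m U (hx (MvPolynomial.mem_support_iff.mp hU))
  exact monomial_sum_mem_weightedProducts a ha _

end Bubbles

theorem veronese_generated_iff_no_bubble_general {n : ℕ} (w : Fin n → ℕ)
    (Q : Type*) [CommRing Q] [Nontrivial Q] :
    (∀ m : ℕ, 1 ≤ m →
        ∀ x ∈ MvPolynomial.weightedHomogeneousSubmodule Q w (lcmW w * m),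
          x ∈ AddSubgroup.closure
            { y : MvPolynomial (Fin n) Q | ∃ g : Fin m → MvPolynomial (Fin n) Q,
                (∀ j, g j ∈ MvPolynomial.weightedHomogeneousSubmodule Q w (lcmW w)) ∧
                y = ∏ j, g j }) ↔
      ¬ ∃ u : Fin n → ℕ, IsBubble w u ∧ lcmW w ∣ dotW w u := by
  refine ⟨fun H ⟨u, hu, k, hk⟩ => ?_, fun hnb m hm x hx => ?_⟩
  · obtain ⟨k, rfl⟩ : ∃ k', k = k' + 1 := ⟨k - 1, by have := hu.two_le_of_dotW_eq hk; omega⟩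
    have hmono : monomial (equivFunOnFinite.symm u) (1 : Q) ∈
        weightedHomogeneousSubmodule Q w (lcmW w * (k + 1)) :=
      isWeightedHomogeneous_monomial _ _ _ (by rw [weight_eq_dotW]; exact hk)
    simpa using (show IsBubble w (equivFunOnFinite.symm u) from hu).coeff_eq_zero_of_mem_closure
      (H _ k.succ_pos _ hmono)
  · obtain ⟨m, rfl⟩ : ∃ m', m = m' + 1 := ⟨m - 1, by omega⟩
    exact mem_closure_weightedProducts_of_not_bubble hnb hx

theorem veronese_generated_iff_no_bubble {n : ℕ} (hn : 0 < n) (w : Fin n → ℕ)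
    (hw : ∀ i, 0 < w i) (Q : Type*) [CommRing Q] [Nontrivial Q] :
    (∀ m : ℕ, 1 ≤ m →
        ∀ x ∈ MvPolynomial.weightedHomogeneousSubmodule Q w (lcmW w * m),
          x ∈ AddSubgroup.closure
            { y : MvPolynomial (Fin n) Q | ∃ g : Fin m → MvPolynomial (Fin n) Q,
                (∀ j, g j ∈ MvPolynomial.weightedHomogeneousSubmodule Q w (lcmW w)) ∧
                y = ∏ j, g j }) ↔
      ¬ ∃ u : Fin n → ℕ, IsBubble w u ∧ lcmW w ∣ dotW w u :=
  veronese_generated_iff_no_bubble_general w Q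
end

section
/- Every w-bubble u satisfies w·u < n·d_w. -/
theorem bubble_dot_lt_n_mul_lcm {n : ℕ} (hn : 0 < n) (w : Fin n → ℕ) (hw : ∀ i, 0 < w i)
    (u : Fin n → ℕ) (hu : IsBubble w u) :
    dotW w u < n * lcmW w := by
  set d := lcmW w with hd
  have hdpos : 0 < d := by
    rw [hd, lcmW]
    rcases Nat.eq_zero_or_pos (Finset.univ.lcm w) with h0 | h
    · rw [Finset.lcm_eq_zero_iff] at h0
      simp only [Set.mem_image, Finset.mem_coe, Finset.mem_univ, true_and] at h0
      obtain ⟨i, hi⟩ := h0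
      exact absurd hi (Nat.pos_iff_ne_zero.mp (hw i))
    · exact h
  -- each term is strictly less than d
  have key : ∀ i, w i * u i < d := by
    intro i
    by_contra h
    push_neg at h
    have hdvd : w i ∣ d := Finset.dvd_lcm (Finset.mem_univ i)
    have hwd : w i * (d / w i) = d := Nat.mul_div_cancel' hdvd
    have hle : d / w i ≤ u i := by
      have := hwd ▸ h
      exact Nat.le_of_mul_le_mul_left this (hw i)
    refine hu.2 ⟨fun j => if j = i then d / w i else 0, ?_, ?_⟩
    · intro j
      by_cases hji : j = i
      · subst hji; simpa using hle
      · simp [hji]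
    · unfold dotW
      rw [Finset.sum_eq_single i]
      · simpa using hwd
      · intro j _ hji; simp [hji]
      · intro hni; exact absurd (Finset.mem_univ i) hni
  have : dotW w u ≤ ∑ _i : Fin n, (d - 1) := by
    apply Finset.sum_le_sum
    intro i _
    exact Nat.le_sub_one_of_lt (key i)
  calc dotW w u ≤ ∑ _i : Fin n, (d - 1) := this
    _ = n * (d - 1) := by simp [Finset.sum_const, mul_comm]
    _ < n * d := by
        exact (Nat.mul_lt_mul_left hn).mpr (Nat.sub_lt hdpos one_pos)
end

section
/- Let u be a w-bubble and let I be a nonempty subset of {1, …, n}. Then Σ_{i ∈ I} w_i u_i ≤ d_w + (|I| − 1)·lcm{w_i : i ∈ I} − Σ_{i ∈ I} w_i. -/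
/-!
Let `L = lcm_{i ∈ I} w_i`, so that `w_i ∣ L ∣ d_w`, and let `m_i = L / w_i`. Then `u` contains
`⌊u_i / m_i⌋` disjoint blocks of `m_i` copies of `e_i`, each of weight exactly `L`, and
`w_i (u_i + 1) ≤ L (⌊u_i / m_i⌋ + 1)`. If the inequality failed, `u` would contain at least
`d_w / L` such blocks, and `d_w / L` of them would form a `v ⪯ u` with `w · v = d_w`.
-/

open Finset

variable {ι : Type*}

theorem Finset.exists_le_sum_eq_of_le_sum (s : Finset ι) (a : ι → ℕ) {k : ℕ}
    (hk : k ≤ ∑ i ∈ s, a i) : ∃ b ≤ a, ∑ i ∈ s, b i = k := by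
  classical
  induction s using Finset.induction_on generalizing k with
  | empty => exact ⟨0, fun _ => Nat.zero_le _, by simp at hk; simp [hk]⟩
  | insert j s hj ih =>
    rw [sum_insert hj] at hk
    obtain ⟨b, hba, hb⟩ := ih (k := k - min k (a j)) (by omega)
    refine ⟨Function.update b j (min k (a j)), fun i => ?_, ?_⟩
    · rcases eq_or_ne i j with rfl | hij
      · simp
      · simpa [hij] using hba i
    · rw [sum_insert hj, Function.update_self, sum_update_of_notMem hj, hb]
      omega

theorem sum_mul_add_one_le_lcm_mul {w : ι → ℕ} (u : ι → ℕ) {I : Finset ι} (hL : 0 < I.lcm w) :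
    ∑ i ∈ I, w i * (u i + 1) ≤ (∑ i ∈ I, u i / (I.lcm w / w i) + #I) * I.lcm w := by
  set L := I.lcm w
  have hwm : ∀ i ∈ I, w i * (L / w i) = L := fun i hi => Nat.mul_div_cancel' (dvd_lcm hi)
  calc ∑ i ∈ I, w i * (u i + 1)
      ≤ ∑ i ∈ I, w i * ((L / w i) * (u i / (L / w i) + 1)) := by
        refine sum_le_sum fun i hi => Nat.mul_le_mul_left _ (Nat.lt_mul_div_succ (u i) ?_)
        exact Nat.pos_of_mul_pos_left (hwm i hi ▸ hL)
    _ = ∑ i ∈ I, (u i / (L / w i) + 1) * L :=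
        sum_congr rfl fun i hi => by rw [← mul_assoc, hwm i hi, mul_comm]
    _ = (∑ i ∈ I, u i / (L / w i) + #I) * L := by
        rw [← sum_mul, sum_add_distrib, sum_const, smul_eq_mul, mul_one]

theorem exists_le_sum_mul_eq_of_lcm_dvd [Fintype ι] {w u : ι → ℕ} {I : Finset ι} {T : ℕ}
    (hT : I.lcm w ∣ T) (h : T + #I * I.lcm w < ∑ i ∈ I, w i * (u i + 1) + I.lcm w) :
    ∃ v ≤ u, ∑ i, w i * v i = T := by
  classical
  set L := I.lcm w
  obtain ⟨k, rfl⟩ := hT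
  rcases Nat.eq_zero_or_pos L with hL | hL
  · exact ⟨0, fun _ => Nat.zero_le _, by simp [hL]⟩
  set m : ι → ℕ := fun i => L / w i
  set a : ι → ℕ := fun i => if i ∈ I then u i / m i else 0
  have hk : k ≤ ∑ i, a i := by
    have hfloor : ∑ i ∈ I, w i * (u i + 1) ≤ (∑ i, a i + #I) * L := by
      simpa only [a, sum_ite_mem, univ_inter] using sum_mul_add_one_le_lcm_mul u hL
    have : (k + #I) * L < (∑ i, a i + #I + 1) * L := by nlinarith
    have := lt_of_mul_lt_mul_right this hL.le
    omega
  obtain ⟨b, hba, hb⟩ := exists_le_sum_eq_of_le_sum univ a hk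
  have hb_out : ∀ i ∉ I, b i = 0 := fun i hi => by simpa [a, hi] using hba i
  refine ⟨fun i => m i * b i, fun i => ?_, ?_⟩
  · by_cases hi : i ∈ I
    · calc m i * b i ≤ m i * (u i / m i) := Nat.mul_le_mul_left _ (by simpa [a, hi] using hba i)
        _ ≤ u i := Nat.mul_div_le _ _
    · simp [hb_out i hi]
  · calc ∑ i, w i * (m i * b i) = ∑ i, L * b i := sum_congr rfl fun i _ => by
          by_cases hi : i ∈ I
          · rw [← mul_assoc, Nat.mul_div_cancel' (dvd_lcm hi)]
          · simp [hb_out i hi]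
      _ = L * k := by rw [← mul_sum, hb]

theorem bubble_subset_sum_le_general {n : ℕ} (w : Fin n → ℕ)
    (u : Fin n → ℕ) (hu : IsBubble w u) (I : Finset (Fin n)) :
    ((∑ i ∈ I, w i * u i : ℕ) : ℤ) ≤
      (lcmW w : ℤ) + ((I.card : ℤ) - 1) * ((I.lcm w : ℕ) : ℤ) - ((∑ i ∈ I, w i : ℕ) : ℤ) := by
  by_contra! h
  have hsplit : ∑ i ∈ I, w i * (u i + 1) = ∑ i ∈ I, w i * u i + ∑ i ∈ I, w i := by
    simp only [mul_add_one, sum_add_distrib]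
  have hlt : lcmW w + #I * I.lcm w < ∑ i ∈ I, w i * (u i + 1) + I.lcm w := by
    rw [hsplit]
    push_cast at h ⊢
    linarith
  obtain ⟨v, hvu, hv⟩ := exists_le_sum_mul_eq_of_lcm_dvd (lcm_mono (subset_univ I)) hlt
  exact hu.2 ⟨v, hvu, hv⟩

theorem bubble_subset_sum_le {n : ℕ} (hn : 0 < n) (w : Fin n → ℕ) (hw : ∀ i, 0 < w i)
    (u : Fin n → ℕ) (hu : IsBubble w u) (I : Finset (Fin n)) (hI : I.Nonempty) :
    ((∑ i ∈ I, w i * u i : ℕ) : ℤ) ≤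
      (lcmW w : ℤ) + ((I.card : ℤ) - 1) * ((I.lcm w : ℕ) : ℤ) - ((∑ i ∈ I, w i : ℕ) : ℤ) :=
  bubble_subset_sum_le_general w u hu I
end

section
/- Every w-bubble u satisfies w·u ≤ (max(w_1, …, w_n) − 2) · Σ_{i=1}^n w_i. -/
/-!
Think of `u` as a multiset of coins, `u j` of them of value `w j`. If some `u i ≥ max w - 1`, put
`a = w i` and `d_w = a Q`. By pigeonhole on prefix sums modulo `a`, any `a` coins contain a
nonempty group whose value is a multiple `a y` of `a`, and `1 ≤ y ≤ max w` since the group has at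
most `a` coins. Splitting such groups off the coins of the other indices until the multiplier
first reaches `Q - u i` overshoots by less than `max w`, so at most `u i` coins of value `a`
complete a subcollection of value exactly `d_w`; `w · u ≥ 2 d_w` guarantees there are enough coins
along the way. Hence every coordinate of a bubble is at most `max w - 2`.
-/

open Finset

theorem List.exists_infix_dvd_sum_map {κ : Type*} (f : κ → ℕ) {a : ℕ} (ha : 0 < a)
    (l : List κ) (hl : a ≤ l.length) :
    ∃ t, t <:+: l ∧ t ≠ [] ∧ t.length ≤ a ∧ a ∣ (t.map f).sum := by
  have of_lt : ∀ i j, i < j → j ≤ a →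
      ((l.take i).map f).sum % a = ((l.take j).map f).sum % a →
      ∃ t, t <:+: l ∧ t ≠ [] ∧ t.length ≤ a ∧ a ∣ (t.map f).sum := by
    intro i j hij hja hmod
    refine ⟨(l.take j).drop i,
      (List.drop_suffix i _).isInfix.trans (List.take_prefix j l).isInfix, ?_, ?_, ?_⟩
    · rw [← List.length_pos_iff]; simp only [List.length_drop, List.length_take]; omega
    · simp only [List.length_drop, List.length_take]; omega
    · have hsplit := List.sum_take_add_sum_drop ((l.take j).map f) i
      rw [← List.map_take, ← List.map_drop, List.take_take, min_eq_left hij.le] at hsplit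
      have := (Nat.modEq_iff_dvd' (hsplit ▸ Nat.le_add_right _ _)).mp hmod
      rwa [← hsplit, Nat.add_sub_cancel_left] at this
  obtain ⟨i, j, hij, hmod⟩ := Fintype.exists_ne_map_eq_of_card_lt
    (fun k : Fin (a + 1) => (⟨((l.take k).map f).sum % a, Nat.mod_lt _ ha⟩ : Fin a)) (by simp)
  simp only [Fin.mk.injEq] at hmod
  rcases Fin.lt_or_lt_of_ne hij with h | h
  · exact of_lt i j h (Nat.lt_succ_iff.mp j.isLt) hmod
  · exact of_lt j i h (Nat.lt_succ_iff.mp i.isLt) hmod.symm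

namespace Multiset

variable {κ : Type*} (w : κ → ℕ)

theorem exists_le_dvd_sum_map {a : ℕ} (ha : 0 < a) (s : Multiset κ) (hs : a ≤ card s) :
    ∃ t ≤ s, t ≠ 0 ∧ card t ≤ a ∧ a ∣ (t.map w).sum := by
  induction s using Quotient.inductionOn with
  | h l =>
    obtain ⟨t, hinf, hne, hlen, hdvd⟩ := l.exists_infix_dvd_sum_map w ha hs
    exact ⟨t, coe_le.2 hinf.sublist.subperm, by simpa using hne, by simpa using hlen,
      by simpa using hdvd⟩

variable [DecidableEq κ]

theorem exists_le_sum_map_eq_mul_of_mul_add_le {a m : ℕ} (ha : 0 < a) (R : ℕ) (s : Multiset κ)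
    (hpos : ∀ j ∈ s, 0 < w j) (hle : ∀ j ∈ s, w j ≤ m + 1) (hsum : a * (R + m) ≤ (s.map w).sum) :
    ∃ t ≤ s, ∃ y, R ≤ y ∧ y ≤ R + m ∧ (t.map w).sum = a * y := by
  induction R using Nat.strong_induction_on generalizing s with
  | _ R ih =>
  rcases R.eq_zero_or_pos with rfl | hR
  · exact ⟨0, zero_le s, 0, le_rfl, by omega, by simp⟩
  have hcard : a ≤ card s := by
    refine Nat.le_of_mul_le_mul_right ?_ m.succ_pos
    calc a * (m + 1) ≤ a * (R + m) := Nat.mul_le_mul_left a (by omega)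
      _ ≤ (s.map w).sum := hsum
      _ ≤ card s * (m + 1) := by simpa using sum_le_card_nsmul (s.map w) (m + 1) (by simpa)
  obtain ⟨t₁, ht₁s, ht₁0, ht₁a, y₁, hy₁⟩ := exists_le_dvd_sum_map w ha s hcard
  have hy₁_pos : 0 < y₁ := by
    refine Nat.pos_of_ne_zero fun hy₁0 => ?_
    obtain ⟨j, hj⟩ := exists_mem_of_ne_zero ht₁0
    have hj_le : w j ≤ (t₁.map w).sum := le_sum_of_mem (mem_map_of_mem w hj)
    rw [hy₁, hy₁0, mul_zero] at hj_le
    exact (hpos j (mem_of_le ht₁s hj)).ne' (Nat.le_zero.mp hj_le)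
  have hy₁_le : y₁ ≤ m + 1 := by
    refine Nat.le_of_mul_le_mul_left ?_ ha
    calc a * y₁ = (t₁.map w).sum := hy₁.symm
      _ ≤ card t₁ * (m + 1) := by
        simpa using sum_le_card_nsmul (t₁.map w) (m + 1)
          (by simpa using fun j hj => hle j (mem_of_le ht₁s hj))
      _ ≤ a * (m + 1) := Nat.mul_le_mul_right _ ht₁a
  by_cases hRy : R ≤ y₁
  · exact ⟨t₁, ht₁s, y₁, hRy, by omega, hy₁⟩
  have hsplit : ((s - t₁).map w).sum + a * y₁ = (s.map w).sum := by
    rw [← hy₁, ← sum_add, ← map_add, tsub_add_cancel_of_le ht₁s]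
  have hrest : a * (R - y₁ + m) + a * y₁ = a * (R + m) := by
    rw [← mul_add]; congr 1; omega
  obtain ⟨t₂, ht₂, y₂, hy₂_ge, hy₂_le, hy₂⟩ := ih (R - y₁) (by omega) (s - t₁)
    (fun j hj => hpos j (mem_of_le (Multiset.sub_le_self s t₁) hj))
    (fun j hj => hle j (mem_of_le (Multiset.sub_le_self s t₁) hj)) (by omega)
  refine ⟨t₂ + t₁, ?_, y₂ + y₁, by omega, by omega, by rw [map_add, sum_add, hy₂, hy₁, mul_add]⟩
  exact (add_le_add ht₂ le_rfl).trans (tsub_add_cancel_of_le ht₁s).le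

theorem exists_le_sum_map_eq_of_le_count {s : Multiset κ} {m d : ℕ} {i : κ}
    (hpos : ∀ j ∈ s, 0 < w j) (hle : ∀ j ∈ s, w j ≤ m + 1) (hi : 0 < w i)
    (hm : m ≤ s.count i) (hd : w i ∣ d) (hsum : 2 * d ≤ (s.map w).sum) :
    ∃ t ≤ s, (t.map w).sum = d := by
  obtain ⟨Q, rfl⟩ := hd
  set c := s.count i
  by_cases hQc : Q ≤ c
  · exact ⟨replicate Q i, le_count_iff_replicate_le.1 hQc, by simp [mul_comm]⟩
  set p := s.filter (· ≠ i)
  have hsplit : p + replicate c i = s := by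
    rw [← filter_eq', add_comm]; exact filter_add_not _ s
  have hp_sum : (p.map w).sum + w i * c = (s.map w).sum := by
    rw [← hsplit, map_add, sum_add, map_replicate, sum_replicate, smul_eq_mul, mul_comm c]
  have hpool : w i * (Q - c + m) + w i * c ≤ w i * Q + w i * Q := by
    rw [← mul_add, ← mul_add]; exact Nat.mul_le_mul_left _ (by omega)
  obtain ⟨t, ht, y, hy_ge, hy_le, hty⟩ := exists_le_sum_map_eq_mul_of_mul_add_le w hi (Q - c) p
    (fun j hj => hpos j (mem_of_mem_filter hj)) (fun j hj => hle j (mem_of_mem_filter hj))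
    (by omega)
  refine ⟨t + replicate (Q - y) i, ?_, ?_⟩
  · rw [← hsplit]; exact add_le_add ht ((replicate_le_replicate i).2 (by omega))
  · rw [map_add, sum_add, hty, map_replicate, sum_replicate, smul_eq_mul, mul_comm (Q - y),
      ← mul_add]
    congr 1; omega

end Multiset

theorem dotW_count {n : ℕ} (w : Fin n → ℕ) (t : Multiset (Fin n)) :
    dotW w (fun i => t.count i) = (t.map w).sum := by
  induction t using Multiset.induction with
  | empty => simp [dotW]
  | cons j t ih => simp [dotW, Multiset.count_cons, mul_add, sum_add_distrib, ← ih, add_comm]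

theorem IsBubble.pos {n : ℕ} {w u : Fin n → ℕ} (hu : IsBubble w u) (j : Fin n) : 0 < w j := by
  refine Nat.pos_of_ne_zero fun hj => hu.2 ⟨0, fun _ => Nat.zero_le _, ?_⟩
  have : lcmW w = 0 := lcm_eq_zero_iff.2 ⟨j, mem_univ j, hj⟩
  simp [dotW, this]

theorem IsBubble.add_two_le_sup {n : ℕ} {w u : Fin n → ℕ} (hu : IsBubble w u) (i : Fin n) :
    u i + 2 ≤ univ.sup w := by
  by_contra! hi
  set S := Finsupp.toMultiset (Finsupp.equivFunOnFinite.symm u)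
  have hS : ∀ j, S.count j = u j := by simp [S]
  obtain ⟨t, htS, ht⟩ := Multiset.exists_le_sum_map_eq_of_le_count w (s := S)
    (m := univ.sup w - 1) (d := lcmW w) (i := i) (fun j _ => hu.pos j)
    (fun j _ => by have := hu.pos j; have := le_sup (f := w) (mem_univ j); omega)
    (hu.pos i) (by rw [hS]; omega) (dvd_lcm (mem_univ i))
    (by rw [← dotW_count, funext hS]; exact hu.1)
  exact hu.2 ⟨fun j => t.count j, fun j => hS j ▸ Multiset.count_le_of_le j htS,
    by rw [dotW_count, ht]⟩

theorem bubble_dot_le_max_sub_two_mul_sum_general {n : ℕ} (w : Fin n → ℕ)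
    (u : Fin n → ℕ) (hu : IsBubble w u) :
    (dotW w u : ℤ) ≤ (((Finset.univ.sup w : ℕ) : ℤ) - 2) * ((∑ i, w i : ℕ) : ℤ) := by
  have hu_le i : (u i : ℤ) ≤ (univ.sup w : ℕ) - 2 := by
    have := hu.add_two_le_sup i; omega
  calc (dotW w u : ℤ) = ∑ i, (w i : ℤ) * u i := by simp [dotW]
    _ ≤ ∑ i, (w i : ℤ) * ((univ.sup w : ℕ) - 2) :=
      sum_le_sum fun i _ => mul_le_mul_of_nonneg_left (hu_le i) (Int.natCast_nonneg _)
    _ = _ := by rw [← sum_mul, mul_comm]; push_cast; rfl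

theorem bubble_dot_le_max_sub_two_mul_sum {n : ℕ} (hn : 0 < n) (w : Fin n → ℕ)
    (hw : ∀ i, 0 < w i) (u : Fin n → ℕ) (hu : IsBubble w u) :
    (dotW w u : ℤ) ≤ (((Finset.univ.sup w : ℕ) : ℤ) - 2) * ((∑ i, w i : ℕ) : ℤ) :=
  bubble_dot_le_max_sub_two_mul_sum_general w u hu
end

section
/- Let u be a w-bubble and let i_1, …, i_N be pairwise distinct indices in {1, …, n} such that w_{i_j} divides w_{i_{j+1}} for every j ∈ {1, …, N−1}. Then Σ_{j=1}^N w_{i_j} u_{i_j} < d_w. -/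
/-! If the chain sum were at least `d_w`, then, since the weights along the chain divide one
another and all divide `d_w`, paying `d_w` greedily (largest weight first) with at most `u_{i_j}`
coins of weight `w_{i_j}` would succeed exactly. Extending these coin counts by zero off the chain
gives `v ⪯ u` with `w · v = d_w`, which a bubble forbids. -/

open Function

lemma Fin.dvd_of_le_of_forall_dvd_succ {α : Type*} [Monoid α] {N : ℕ} {W : Fin N → α}
    (h : ∀ (j : ℕ) (hj : j + 1 < N), W ⟨j, Nat.lt_of_succ_lt hj⟩ ∣ W ⟨j + 1, hj⟩)
    {j k : Fin N} (hjk : j ≤ k) : W j ∣ W k := by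
  obtain ⟨k, hk⟩ := k
  induction k with
  | zero => rw [show j = ⟨0, hk⟩ from Fin.ext (Nat.le_zero.mp hjk)]
  | succ k ih =>
    rcases (Fin.mk_le_mk.mp hjk).lt_or_eq with hlt | heq
    · exact (ih (by omega) (Fin.mk_le_mk.mpr (by omega))).trans (h k hk)
    · rw [show j = ⟨k + 1, hk⟩ from Fin.ext heq]

/-- Greedy change-making: taking as many coins of the largest weight as possible leaves a
remainder that is still divisible by all the smaller weights. -/
theorem exists_le_sum_mul_eq_of_dvd_chain {N : ℕ} (W C : Fin N → ℕ)
    (hchain : ∀ j k, j ≤ k → W j ∣ W k) (r : ℕ) (hdvd : ∀ j, W j ∣ r)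
    (hr : r ≤ ∑ j, W j * C j) : ∃ v ≤ C, ∑ j, W j * v j = r := by
  induction N generalizing r with
  | zero => exact ⟨0, fun _ => Nat.zero_le _, by simp at hr ⊢; omega⟩
  | succ N ih =>
    rw [Fin.sum_univ_castSucc] at hr
    set a := W (Fin.last N)
    set m := min (C (Fin.last N)) (r / a) with hm
    have hmr : a * m ≤ r := (Nat.mul_le_mul_left _ (min_le_right _ _)).trans (Nat.mul_div_le r a)
    have hrest : r - a * m ≤ ∑ j : Fin N, W j.castSucc * C j.castSucc := by
      rcases le_total (C (Fin.last N)) (r / a) with h | h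
      · rw [hm, min_eq_left h]
        omega
      · rw [hm, min_eq_right h, Nat.mul_div_cancel' (hdvd _), Nat.sub_self]
        exact Nat.zero_le _
    obtain ⟨v, hvC, hv⟩ := ih (W ∘ Fin.castSucc) (C ∘ Fin.castSucc)
      (fun j k hjk => hchain _ _ (Fin.castSucc_le_castSucc_iff.mpr hjk)) (r - a * m)
      (fun j => Nat.dvd_sub (hdvd _) (dvd_mul_of_dvd_left (hchain _ _ (Fin.le_last _)) m)) hrest
    refine ⟨Fin.snoc v m, fun j => ?_, ?_⟩
    · induction j using Fin.lastCases with
      | last => simp only [Fin.snoc_last]; exact min_le_left _ _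
      | cast j => simpa using hvC j
    · rw [Fin.sum_univ_castSucc]
      simp only [Fin.snoc_castSucc, Fin.snoc_last]
      rw [← Nat.sub_add_cancel hmr, ← hv]
      rfl

lemma exists_le_dotW_eq_sum_comp {N n : ℕ} {e : Fin N → Fin n} (he : Injective e)
    (w : Fin n → ℕ) {u : Fin n → ℕ} {v : Fin N → ℕ} (hv : v ≤ u ∘ e) :
    ∃ v' ≤ u, dotW w v' = ∑ j, w (e j) * v j := by
  refine ⟨extend e v 0, fun i => ?_, ?_⟩
  · by_cases hi : ∃ j, e j = i
    · obtain ⟨j, rfl⟩ := hi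
      rw [he.extend_apply]
      exact hv j
    · simp [extend_apply' _ _ _ hi]
  · refine (Fintype.sum_of_injective e he _ _ (fun i hi => ?_) (fun j => ?_)).symm
    · simp [extend_apply' _ _ _ hi]
    · rw [he.extend_apply]

theorem bubble_chain_sum_lt_lcm {n : ℕ} (w : Fin n → ℕ)
    (u : Fin n → ℕ) (hu : IsBubble w u)
    (N : ℕ) (e : Fin N → Fin n) (he : Function.Injective e)
    (hdvd : ∀ (j : ℕ) (h : j + 1 < N), w (e ⟨j, by omega⟩) ∣ w (e ⟨j + 1, h⟩)) :
    ∑ j, w (e j) * u (e j) < lcmW w := by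
  by_contra! hge
  obtain ⟨v, hvu, hv⟩ := exists_le_sum_mul_eq_of_dvd_chain (w ∘ e) (u ∘ e)
    (fun _ _ => Fin.dvd_of_le_of_forall_dvd_succ hdvd) (lcmW w)
    (fun _ => Finset.dvd_lcm (Finset.mem_univ _)) hge
  obtain ⟨v', hv'u, hv'⟩ := exists_le_dotW_eq_sum_comp he w hvu
  exact hu.2 ⟨v', hv'u, hv'.trans hv⟩
end

section
/- Suppose there exists a partition {I_1, …, I_N} of {1, …, n} such that each I_j can be enumerated as a sequence i_1, …, i_M with w_{i_l} dividing w_{i_{l+1}} for every l ∈ {1, …, M−1} (i.e. each I_j is the vertex set of a directed path in the divisibility graph G_w). Then every w-bubble u satisfies w·u < N·d_w. -/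
/-- Greedy selection along a divisibility chain: if the target `t` is divisible by the top
weight, lower weights divide the next one up, and `t` is at most the total capacity,
then the target can be hit exactly. -/
lemma greedy_chain (a c : ℕ → ℕ) : ∀ (M t : ℕ),
    (∀ m, m + 1 < M → a m ∣ a (m + 1)) →
    (∀ m, m + 1 = M → a m ∣ t) →
    t ≤ ∑ m ∈ Finset.range M, a m * c m →
    ∃ v : ℕ → ℕ, (∀ m, v m ≤ c m) ∧ ∑ m ∈ Finset.range M, a m * v m = t := by
  intro M
  induction M with
  | zero =>
    intro t _ _ ht
    simp only [Finset.range_zero, Finset.sum_empty, Nat.le_zero] at ht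
    exact ⟨fun _ => 0, fun _ => Nat.zero_le _, by simp [ht]⟩
  | succ M ih =>
    intro t hchain hdvd ht
    have hdM : a M ∣ t := hdvd M rfl
    rw [Finset.sum_range_succ] at ht
    by_cases hc : t / a M ≤ c M
    · refine ⟨fun m => if m = M then t / a M else 0, ?_, ?_⟩
      · intro m; by_cases h : m = M <;> simp [h, hc]
      · rw [Finset.sum_range_succ]
        have h0 : ∑ m ∈ Finset.range M, a m * (if m = M then t / a M else 0) = 0 := by
          apply Finset.sum_eq_zero; intro m hm
          rw [Finset.mem_range] at hm
          simp [Nat.ne_of_lt hm]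
        rw [h0]
        simp [Nat.mul_div_cancel' hdM]
    · push_neg at hc
      have hle : a M * c M ≤ t := by
        calc a M * c M ≤ a M * (t / a M) := Nat.mul_le_mul_left _ (le_of_lt hc)
          _ = t := Nat.mul_div_cancel' hdM
      obtain ⟨v, hv, hsum⟩ := ih (t - a M * c M)
        (fun m hm => hchain m (by omega))
        (fun m hm => by
          have h1 : a m ∣ a (m + 1) := hchain m (by omega)
          rw [hm] at h1
          exact Nat.dvd_sub (h1.trans hdM) (h1.mul_right _))
        (by omega)
      refine ⟨fun m => if m = M then c M else v m, ?_, ?_⟩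
      · intro m; by_cases h : m = M <;> simp [h, hv m]
      · rw [Finset.sum_range_succ]
        have h0 : ∑ m ∈ Finset.range M, a m * (if m = M then c M else v m)
            = ∑ m ∈ Finset.range M, a m * v m := by
          apply Finset.sum_congr rfl; intro m hm
          rw [Finset.mem_range] at hm; simp [Nat.ne_of_lt hm]
        rw [h0, hsum]
        show t - a M * c M + a M * (if M = M then c M else v M) = t
        rw [if_pos rfl]
        omega

theorem bubble_dot_lt_of_chain_partition {n : ℕ} (hn : 0 < n) (w : Fin n → ℕ)
    (hw : ∀ i, 0 < w i) (N : ℕ) (f : Fin n → Fin N) (hf : Function.Surjective f)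
    (hchain : ∀ k : Fin N, ∃ (M : ℕ) (e : Fin M → Fin n),
      Function.Injective e ∧ (∀ m, f (e m) = k) ∧ (∀ i, f i = k → ∃ m, e m = i) ∧
      ∀ (m : ℕ) (h : m + 1 < M), w (e ⟨m, by omega⟩) ∣ w (e ⟨m + 1, h⟩))
    (u : Fin n → ℕ) (hu : IsBubble w u) :
    dotW w u < N * lcmW w := by
  by_contra hlt
  push_neg at hlt
  obtain ⟨_, hno⟩ := hu
  apply hno
  set d := lcmW w with hd
  -- fiberwise decomposition
  have hfib : dotW w u
      = ∑ k : Fin N, ∑ i ∈ Finset.univ.filter (fun i => f i = k), w i * u i := by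
    rw [dotW]
    exact (Finset.sum_fiberwise _ _ _).symm
  have hNpos : 0 < N := (f ⟨0, hn⟩).pos
  have hne : (Finset.univ : Finset (Fin N)).Nonempty :=
    ⟨⟨0, hNpos⟩, Finset.mem_univ _⟩
  have hsumconst : ∑ _k : Fin N, d = N * d := by
    simp [Finset.sum_const, Finset.card_univ]
  obtain ⟨k, -, hk⟩ := Finset.exists_le_of_sum_le (f := fun _ : Fin N => d)
    (g := fun k : Fin N => ∑ i ∈ Finset.univ.filter (fun i => f i = k), w i * u i)
    hne (by rw [hsumconst, ← hfib]; exact hlt)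
  obtain ⟨M, e, he_inj, hfe, hsurj, hdvdchain⟩ := hchain k
  -- the fiber is the image of e
  have himg : Finset.univ.filter (fun i => f i = k) = Finset.image e Finset.univ := by
    ext i
    simp only [Finset.mem_filter, Finset.mem_univ, true_and, Finset.mem_image]
    constructor
    · intro h
      obtain ⟨m, hm⟩ := hsurj i h
      exact ⟨m, by simp [hm]⟩
    · rintro ⟨m, -, rfl⟩
      exact hfe m
  have hSk : ∑ i ∈ Finset.univ.filter (fun i => f i = k), w i * u i
      = ∑ m : Fin M, w (e m) * u (e m) := by
    rw [himg, Finset.sum_image (fun m _ m' _ h => he_inj h)]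
  rw [hSk] at hk
  -- set up the ℕ-indexed chain data
  set a : ℕ → ℕ := fun m => if h : m < M then w (e ⟨m, h⟩) else 1 with ha
  set c : ℕ → ℕ := fun m => if h : m < M then u (e ⟨m, h⟩) else 0 with hc
  have haval : ∀ m : Fin M, a m.val = w (e m) := by
    intro m; simp [ha, m.isLt]
  have hcval : ∀ m : Fin M, c m.val = u (e m) := by
    intro m; simp [hc, m.isLt]
  have hcap : d ≤ ∑ m ∈ Finset.range M, a m * c m := by
    rw [← Fin.sum_univ_eq_sum_range]
    calc d ≤ ∑ m : Fin M, w (e m) * u (e m) := hk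
      _ = ∑ m : Fin M, a m.val * c m.val := by
          apply Finset.sum_congr rfl; intro m _; rw [haval, hcval]
  obtain ⟨v, hv, hsum⟩ := greedy_chain a c M d
    (fun m hm => by
      have h1 : m < M := by omega
      simpa [ha, h1, hm] using hdvdchain m hm)
    (fun m hm => by
      have h1 : m < M := by omega
      simp only [ha, dif_pos h1]
      exact Finset.dvd_lcm (Finset.mem_univ _))
    hcap
  -- build the witness vector on Fin n
  classical
  refine ⟨fun i => if h : ∃ m : Fin M, e m = i then v h.choose.val else 0, ?_, ?_⟩
  · intro i
    by_cases h : ∃ m : Fin M, e m = i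
    · simp only [dif_pos h]
      have hspec := h.choose_spec
      calc v h.choose.val ≤ c h.choose.val := hv _
        _ = u (e h.choose) := hcval _
        _ = u i := by rw [hspec]
    · simp [h]
  · rw [dotW]
    have hzero : ∀ i ∈ Finset.univ, i ∉ Finset.image e Finset.univ →
        w i * (if h : ∃ m : Fin M, e m = i then v h.choose.val else 0) = 0 := by
      intro i _ hi
      have : ¬ ∃ m : Fin M, e m = i := by
        intro ⟨m, hm⟩
        exact hi (Finset.mem_image.mpr ⟨m, Finset.mem_univ _, hm⟩)
      simp [this]
    rw [← Finset.sum_subset (Finset.subset_univ (Finset.image e Finset.univ)) hzero,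
      Finset.sum_image (fun m _ m' _ h => he_inj h)]
    have hVe : ∀ m : Fin M,
        (if h : ∃ m' : Fin M, e m' = e m then v h.choose.val else 0) = v m.val := by
      intro m
      have h : ∃ m' : Fin M, e m' = e m := ⟨m, rfl⟩
      rw [dif_pos h]
      congr 1
      exact congrArg Fin.val (he_inj h.choose_spec)
    calc ∑ m : Fin M, w (e m) * (if h : ∃ m' : Fin M, e m' = e m then v h.choose.val else 0)
        = ∑ m : Fin M, a m.val * v m.val := by
          apply Finset.sum_congr rfl; intro m _; rw [hVe, haval]
      _ = ∑ m ∈ Finset.range M, a m * v m := Fin.sum_univ_eq_sum_range (fun m => a m * v m) M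
      _ = d := hsum
end

section
/- If n ≥ 3 and, after a suitable permutation of the weights, one has the divisibility chain w_1 ∣ w_2 ∣ … ∣ w_{n−2} ∣ (w_{n−1} + w_n), then there are no w-bubbles. -/
/-- Greedy lemma: for a divisibility chain, any target that is a multiple of the top
weight and bounded by the capped total is achievable as a capped subsum. -/
lemma chain_greedy (g cap : ℕ → ℕ) (hg : ∀ j, 0 < g j) :
    ∀ (m T : ℕ), (∀ j, j + 1 ≤ m → g j ∣ g (j + 1)) → g m ∣ T →
      T ≤ ∑ j ∈ Finset.range (m + 1), g j * cap j →
      ∃ v : ℕ → ℕ, (∀ j, v j ≤ cap j) ∧ ∑ j ∈ Finset.range (m + 1), g j * v j = T := by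
  intro m
  induction m with
  | zero =>
    intro T _ hdvd hle
    refine ⟨fun j => if j = 0 then T / g 0 else 0, fun j => ?_, ?_⟩
    · by_cases h : j = 0
      · subst h
        simp only [if_pos rfl]
        calc T / g 0 ≤ g 0 * cap 0 / g 0 := Nat.div_le_div_right (by simpa using hle)
          _ = cap 0 := Nat.mul_div_cancel_left _ (hg 0)
      · simp [h]
    · simp [Nat.mul_div_cancel' hdvd]
  | succ m ih =>
    intro T hchain hdvd hle
    by_cases hc : T / g (m + 1) ≤ cap (m + 1)
    · refine ⟨fun j => if j = m + 1 then T / g (m + 1) else 0, fun j => ?_, ?_⟩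
      · by_cases h : j = m + 1
        · subst h; simpa using hc
        · simp [h]
      · beta_reduce
        rw [Finset.sum_range_succ, if_pos rfl, Nat.mul_div_cancel' hdvd]
        rw [Finset.sum_congr rfl (fun j hj => ?_), Finset.sum_const_zero, zero_add]
        have hj' : j ≠ m + 1 := by
          have := Finset.mem_range.mp hj; omega
        simp [hj']
    · push_neg at hc
      have hXT : g (m + 1) * cap (m + 1) ≤ T := by
        calc g (m + 1) * cap (m + 1) ≤ g (m + 1) * (T / g (m + 1)) :=
              Nat.mul_le_mul_left _ (le_of_lt hc)
          _ ≤ T := Nat.mul_div_le T (g (m + 1))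
      have hdvd' : g m ∣ T - g (m + 1) * cap (m + 1) :=
        Nat.dvd_sub ((hchain m le_rfl).trans hdvd)
          (Dvd.dvd.mul_right (hchain m le_rfl) _)
      have hle' : T - g (m + 1) * cap (m + 1) ≤ ∑ j ∈ Finset.range (m + 1), g j * cap j := by
        rw [Finset.sum_range_succ] at hle
        omega
      obtain ⟨v', hv'le, hv'sum⟩ := ih (T - g (m + 1) * cap (m + 1))
        (fun j hj => hchain j (by omega)) hdvd' hle'
      refine ⟨fun j => if j = m + 1 then cap (m + 1) else v' j, fun j => ?_, ?_⟩
      · by_cases h : j = m + 1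
        · simp [h]
        · simpa [h] using hv'le j
      · beta_reduce
        rw [Finset.sum_range_succ, if_pos rfl]
        rw [Finset.sum_congr rfl (fun j hj => ?_), hv'sum]
        · omega
        · have hj' : j ≠ m + 1 := by
            have := Finset.mem_range.mp hj; omega
          simp [hj']

theorem no_bubble_of_divisibility_chain {n : ℕ} (hn : 3 ≤ n) (w : Fin n → ℕ)
    (hw : ∀ i, 0 < w i) (σ : Equiv.Perm (Fin n))
    (hchain : ∀ (j : ℕ) (h : j + 1 < n - 2), w (σ ⟨j, by omega⟩) ∣ w (σ ⟨j + 1, by omega⟩))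
    (hlast : w (σ ⟨n - 3, by omega⟩) ∣ w (σ ⟨n - 2, by omega⟩) + w (σ ⟨n - 1, by omega⟩)) :
    ¬ ∃ u : Fin n → ℕ, IsBubble w u := by
  rintro ⟨u, h2d, hno⟩
  apply hno
  obtain ⟨k, rfl⟩ : ∃ k, n = k + 3 := ⟨n - 3, by omega⟩
  set d := lcmW w with hd_def
  -- weights and caps in σ-coordinates, as functions on ℕ
  set g : ℕ → ℕ := fun j => if h : j < k + 3 then w (σ ⟨j, h⟩) else 1 with hg_def
  set uσ : ℕ → ℕ := fun j => if h : j < k + 3 then u (σ ⟨j, h⟩) else 0 with huσ_def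
  have hgpos : ∀ j, 0 < g j := by
    intro j
    simp only [hg_def]
    split
    · exact hw _
    · norm_num
  have hgd : ∀ j (h : j < k + 3), g j ∣ d := by
    intro j h
    simp only [hg_def, dif_pos h]
    exact Finset.dvd_lcm (Finset.mem_univ _)
  -- conversion: dot products through σ
  have hconv : ∀ xσ : ℕ → ℕ,
      dotW w (fun i => xσ ((σ.symm i : Fin (k + 3)) : ℕ)) =
        ∑ j ∈ Finset.range (k + 3), g j * xσ j := by
    intro xσ
    rw [dotW, ← Equiv.sum_comp σ (fun i => w i * xσ ((σ.symm i : Fin (k + 3)) : ℕ))]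
    rw [← Fin.sum_univ_eq_sum_range (fun j => g j * xσ j) (k + 3)]
    refine Finset.sum_congr rfl fun j _ => ?_
    simp only [Equiv.symm_apply_apply, hg_def, dif_pos j.isLt]
  have hueq : (fun i => uσ ((σ.symm i : Fin (k + 3)) : ℕ)) = u := by
    funext i
    simp only [huσ_def, dif_pos (σ.symm i).isLt]
    congr 1
    simp
  have husum : dotW w u = ∑ j ∈ Finset.range (k + 3), g j * uσ j := by
    rw [← hueq]; exact hconv uσ
  -- key constructor
  have hkey : ∀ vσ : ℕ → ℕ, (∀ j, vσ j ≤ uσ j) →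
      (∑ j ∈ Finset.range (k + 3), g j * vσ j) = d →
      ∃ v : Fin (k + 3) → ℕ, (∀ i, v i ≤ u i) ∧ dotW w v = lcmW w := by
    intro vσ hv hsum
    refine ⟨fun i => vσ ((σ.symm i : Fin (k + 3)) : ℕ), fun i => ?_, ?_⟩
    · have h := hv ((σ.symm i : Fin (k + 3)) : ℕ)
      rw [← hueq]
      exact h
    · rw [hconv vσ, hsum]
  set a := g k with ha_def
  set b := g (k + 1) with hb_def
  set c := g (k + 2) with hc_def
  set C := ∑ j ∈ Finset.range (k + 1), g j * uσ j with hC_def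
  set p := uσ (k + 1) with hp_def
  set q := uσ (k + 2) with hq_def
  have hsplit : ∑ j ∈ Finset.range (k + 3), g j * uσ j = C + b * p + c * q := by
    rw [show k + 3 = (k + 1) + 1 + 1 by ring, Finset.sum_range_succ, Finset.sum_range_succ]
  have h2d' : 2 * d ≤ C + b * p + c * q := by
    rw [← hsplit, ← husum]; exact h2d
  have hbd : b ∣ d := hgd (k + 1) (by omega)
  have hcd : c ∣ d := hgd (k + 2) (by omega)
  have had : a ∣ d := hgd k (by omega)
  have hbc : a ∣ b + c := by
    have := hlast
    simp only [ha_def, hb_def, hc_def, hg_def, dif_pos (show k < k + 3 by omega),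
      dif_pos (show k + 1 < k + 3 by omega), dif_pos (show k + 2 < k + 3 by omega)]
    exact this
  have hchain' : ∀ j, j + 1 ≤ k → g j ∣ g (j + 1) := by
    intro j hj
    have h := hchain j (by omega)
    simp only [hg_def, dif_pos (show j < k + 3 by omega),
      dif_pos (show j + 1 < k + 3 by omega)]
    exact h
  have hbpos : 0 < b := hgpos _
  have hcpos : 0 < c := hgpos _
  by_cases hbp : d ≤ b * p
  · -- take d / b copies of b
    refine hkey (fun j => if j = k + 1 then d / b else 0) (fun j => ?_) ?_
    · by_cases h : j = k + 1
      · subst h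
        simp only [if_pos rfl]
        have : b * (d / b) ≤ b * p := by rw [Nat.mul_div_cancel' hbd]; exact hbp
        exact Nat.le_of_mul_le_mul_left this hbpos
      · simp [h]
    · beta_reduce
      rw [Finset.sum_eq_single (k + 1)]
      · rw [if_pos rfl]; exact Nat.mul_div_cancel' hbd
      · intro j _ hj; simp [hj]
      · intro h; exact absurd (Finset.mem_range.mpr (by omega)) h
  · by_cases hcq : d ≤ c * q
    · refine hkey (fun j => if j = k + 2 then d / c else 0) (fun j => ?_) ?_
      · by_cases h : j = k + 2
        · subst h
          simp only [if_pos rfl]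
          have : c * (d / c) ≤ c * q := by rw [Nat.mul_div_cancel' hcd]; exact hcq
          exact Nat.le_of_mul_le_mul_left this hcpos
        · simp [h]
      · beta_reduce
        rw [Finset.sum_eq_single (k + 2)]
        · rw [if_pos rfl]; exact Nat.mul_div_cancel' hcd
        · intro j _ hj; simp [hj]
        · intro h; exact absurd (Finset.mem_range.mpr (by omega)) h
    · push_neg at hbp hcq
      set m := min p (min q (d / (b + c))) with hm_def
      have hmd : (b + c) * m ≤ d := by
        calc (b + c) * m ≤ (b + c) * (d / (b + c)) :=
              Nat.mul_le_mul_left _ (by omega)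
          _ ≤ d := Nat.mul_div_le d (b + c)
      have hTC : d ≤ C + (b + c) * m := by
        have hcase : m = p ∨ m = q ∨ m = d / (b + c) := by omega
        rcases hcase with h | h | h
        · have : (b + c) * m = b * p + c * p := by rw [h]; ring
          rw [this]
          nlinarith [Nat.zero_le (c * p)]
        · have : (b + c) * m = b * q + c * q := by rw [h]; ring
          rw [this]
          nlinarith [Nat.zero_le (b * q)]
        · obtain ⟨e, he⟩ := hbd
          obtain ⟨f, hf⟩ := hcd
          have hb1 : b * p + b ≤ d := by
            have hpe : p < e := by
              by_contra hcon
              push_neg at hcon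
              exact absurd (he ▸ Nat.mul_le_mul_left b hcon) (by omega)
            calc b * p + b = b * (p + 1) := by ring
              _ ≤ b * e := Nat.mul_le_mul_left b (by omega)
              _ = d := he.symm
          have hc1 : c * q + c ≤ d := by
            have hqf : q < f := by
              by_contra hcon
              push_neg at hcon
              exact absurd (hf ▸ Nat.mul_le_mul_left c hcon) (by omega)
            calc c * q + c = c * (q + 1) := by ring
              _ ≤ c * f := Nat.mul_le_mul_left c (by omega)
              _ = d := hf.symm
          have hdm : d < (b + c) * m + (b + c) := by
            rw [h]
            have h1 := Nat.div_add_mod d (b + c)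
            have h2 : d % (b + c) < b + c := Nat.mod_lt d (by omega)
            omega
          linarith
      -- chain part
      have haT : a ∣ d - (b + c) * m := Nat.dvd_sub had (Dvd.dvd.mul_right hbc m)
      have hT'C : d - (b + c) * m ≤ C := by omega
      obtain ⟨v', hv'le, hv'sum⟩ := chain_greedy g uσ hgpos k (d - (b + c) * m)
        hchain' haT (hC_def ▸ hT'C)
      refine hkey (fun j => if j < k + 1 then v' j else if j < k + 3 then m else 0)
        (fun j => ?_) ?_
      · by_cases h1 : j < k + 1
        · simpa [h1] using hv'le j
        · by_cases h2 : j < k + 3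
          · have : j = k + 1 ∨ j = k + 2 := by omega
            rcases this with h | h <;> simp [h1, h2, h] <;> omega
          · simp [h1, h2]
      · beta_reduce
        have hsplit3 : ∀ x : ℕ → ℕ, ∑ j ∈ Finset.range (k + 3), x j =
            (∑ j ∈ Finset.range (k + 1), x j) + x (k + 1) + x (k + 2) := by
          intro x
          rw [show k + 3 = k + 1 + 1 + 1 by ring, Finset.sum_range_succ, Finset.sum_range_succ]
        rw [hsplit3]
        have e1 : g (k + 1) * (if k + 1 < k + 1 then v' (k + 1) else
            if k + 1 < k + 3 then m else 0) = b * m := by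
          rw [if_neg (by omega), if_pos (by omega)]
        have e2 : g (k + 2) * (if k + 2 < k + 1 then v' (k + 2) else
            if k + 2 < k + 3 then m else 0) = c * m := by
          rw [if_neg (by omega), if_pos (by omega)]
        rw [e1, e2]
        rw [Finset.sum_congr rfl (fun j hj => by
          rw [if_pos (Finset.mem_range.mp hj)]), hv'sum]
        have e3 : d - (b + c) * m + b * m + c * m = d - (b + c) * m + (b + c) * m := by ring
        rw [e3, Nat.sub_add_cancel hmd]
end

section
/- Every w-bubble u such that d_w divides w·u satisfies w·u ≤ (n−2)·d_w. -/
/-!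
A bubble has `w i * u i < d` for every `i` (otherwise a multiple of a unit vector has weight
`d`), so the deficits `x i = d - w i * u i` are positive multiples of `w i` whose sum is a
multiple of `d`, and it suffices to rule out `∑ x i = d`. In that case we find multiples `y i`
of `w i` with `y i ≤ d - x i` and `∑ y i = d`, i.e. a `v ⪯ u` with `w · v = d`. If every
`x i ≤ d / 2`, take `y = x`. Otherwise some `x k > d / 2`; let `x j` be the least of the others.
Putting a common multiple `m` of two weights into one coordinate and `d - m` into the other
forces `lcm (w j) (w i) = d` for every `i ∉ {j, k}`, and `d < x j + x k + lcm (w j) (w k)`.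
Comparing prime powers then gives `lcm (w j) (w k) ∣ x j`, so for any third index `i`,
`d < 2 x j + x k ≤ x i + x j + x k ≤ d`.
-/

open Finset

theorem Nat.Prime.pow_dvd_of_dvd_lcm_of_not_dvd {p e a b : ℕ} (hp : p.Prime) (ha : a ≠ 0)
    (hb : b ≠ 0) (h : p ^ e ∣ Nat.lcm a b) (hna : ¬ p ^ e ∣ a) : p ^ e ∣ b := by
  rw [hp.pow_dvd_iff_le_factorization (Nat.lcm_ne_zero ha hb), Nat.factorization_lcm ha hb,
    Finsupp.sup_apply] at h
  rw [hp.pow_dvd_iff_le_factorization ha] at hna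
  rw [hp.pow_dvd_iff_le_factorization hb]
  omega

theorem Nat.exists_dvd_mem_Icc_of_add_le {L lo hi : ℕ} (hL : 0 < L) (h : lo + L ≤ hi) :
    ∃ m, L ∣ m ∧ lo ≤ m ∧ m ≤ hi := by
  refine ⟨L * (hi / L), dvd_mul_right _ _, ?_, Nat.mul_div_le hi L⟩
  have := Nat.div_add_mod hi L
  have := Nat.mod_lt hi hL
  omega

theorem Finset.add_add_le_sum {ι : Type*} [Fintype ι] [DecidableEq ι] (f : ι → ℕ)
    {i j k : ι} (hij : i ≠ j) (hik : i ≠ k) (hjk : j ≠ k) : f i + f j + f k ≤ ∑ l, f l :=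
  calc f i + f j + f k = ∑ l ∈ {i, j, k}, f l := by
        rw [sum_insert (by simp [hij, hik]), sum_pair hjk, add_assoc]
    _ ≤ ∑ l, f l := sum_le_sum_of_subset (subset_univ _)

section Representable

variable {n : ℕ} {w x : Fin n → ℕ} {d : ℕ}

/-- With `x i = d - w i * u i`, this says that some `v ⪯ u` has `w · v = d`
(take `y i = w i * v i`). -/
def Representable (w x : Fin n → ℕ) (d : ℕ) : Prop :=
  ∃ y : Fin n → ℕ, (∀ i, w i ∣ y i ∧ y i ≤ d - x i) ∧ ∑ i, y i = d

theorem representable_of_two_mul_le (hwx : ∀ i, w i ∣ x i) (hsum : ∑ i, x i = d)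
    (hx : ∀ i, 2 * x i ≤ d) : Representable w x d :=
  ⟨x, fun i => ⟨hwx i, by have := hx i; omega⟩, hsum⟩

theorem representable_of_common_multiple {j k : Fin n} (hjk : j ≠ k) (hwd : w k ∣ d) {m : ℕ}
    (hjm : w j ∣ m) (hkm : w k ∣ m) (hxk : x k ≤ m) (hmj : m ≤ d - x j) :
    Representable w x d := by
  refine ⟨Pi.single j m + Pi.single k (d - m), fun i => ?_, by simp [sum_add_distrib]; omega⟩
  rcases eq_or_ne i j with rfl | hij
  · simp [hjk, hjm, hmj]
  rcases eq_or_ne i k with rfl | hik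
  · simp [hij, Nat.dvd_sub hwd hkm]
    omega
  · simp [hij, hik]

theorem lcm_eq_of_not_representable (h : ¬ Representable w x d) {j k : Fin n} (hjk : j ≠ k)
    (hwj : w j ∣ d) (hwk : w k ∣ d) (hxj : 3 * x j ≤ d) (hxk : 2 * x k ≤ d) :
    Nat.lcm (w j) (w k) = d := by
  obtain ⟨q, hq⟩ := Nat.lcm_dvd hwj hwk
  set L := Nat.lcm (w j) (w k)
  have hjL : w j ∣ L := Nat.dvd_lcm_left _ _
  have hkL : w k ∣ L := Nat.dvd_lcm_right _ _
  -- Unless `d = L`, some multiple of `L` is close enough to `d / 2` to split `d` in two.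
  obtain ⟨r, rfl | rfl⟩ := Nat.even_or_odd' q
  · have hd : d = 2 * (L * r) := by rw [hq]; ring
    exact absurd (representable_of_common_multiple hjk hwk (hjL.mul_right r) (hkL.mul_right r)
      (by omega) (by omega)) h
  · rcases r with _ | r
    · simpa using hq.symm
    have hd : d = 2 * (L * (r + 1)) + L := by rw [hq]; ring
    have hL : L ≤ L * (r + 1) := Nat.le_mul_of_pos_right L r.succ_pos
    exact absurd (representable_of_common_multiple hjk.symm hwj (hkL.mul_right (r + 1))
      (hjL.mul_right (r + 1)) (by omega) (by omega)) h

theorem lt_add_lcm_of_not_representable (h : ¬ Representable w x d) (hw : ∀ i, 0 < w i)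
    {j k : Fin n} (hjk : j ≠ k) (hwd : w k ∣ d) : d < x j + x k + Nat.lcm (w j) (w k) := by
  by_contra! hle
  obtain ⟨m, hm, hlo, hhi⟩ := Nat.exists_dvd_mem_Icc_of_add_le (lo := x k) (hi := d - x j)
    (Nat.lcm_pos (hw j) (hw k)) (by omega)
  exact h (representable_of_common_multiple hjk hwd ((Nat.dvd_lcm_left _ _).trans hm)
    ((Nat.dvd_lcm_right _ _).trans hm) hlo hhi)

theorem dvd_of_forall_lcm_eq (hw : ∀ i, 0 < w i) (hwx : ∀ i, w i ∣ x i)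
    (hsum : ∑ i, x i = d) {j k : Fin n} (hwd : w k ∣ d)
    (hlcm : ∀ i, i ≠ j → i ≠ k → Nat.lcm (w j) (w i) = d) :
    w k ∣ x j := by
  refine (Nat.dvd_iff_prime_pow_dvd_dvd _ _).2 fun p e hp hpe => ?_
  by_cases hpj : p ^ e ∣ w j
  · exact hpj.trans (hwx j)
  have hrest : ∀ i ∈ univ.erase j, p ^ e ∣ x i := by
    intro i hi
    rcases eq_or_ne i k with rfl | hik
    · exact hpe.trans (hwx i)
    have hpi : p ^ e ∣ Nat.lcm (w j) (w i) := hlcm i (ne_of_mem_erase hi) hik ▸ hpe.trans hwd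
    exact (hp.pow_dvd_of_dvd_lcm_of_not_dvd (hw j).ne' (hw i).ne' hpi hpj).trans (hwx i)
  have hpd : p ^ e ∣ x j + ∑ i ∈ univ.erase j, x i := by
    rw [add_sum_erase _ _ (mem_univ j), hsum]
    exact hpe.trans hwd
  exact (Nat.dvd_add_left (dvd_sum hrest)).1 hpd

theorem representable_of_sum_eq (hn : 3 ≤ n) (hw : ∀ i, 0 < w i) (hwd : ∀ i, w i ∣ d)
    (hwx : ∀ i, w i ∣ x i) (hx : ∀ i, 0 < x i) (hsum : ∑ i, x i = d) :
    Representable w x d := by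
  by_contra h
  obtain ⟨k, hk⟩ : ∃ k, d < 2 * x k := by
    by_contra! hsmall
    exact h (representable_of_two_mul_le hwx hsum hsmall)
  have hcard : 0 < #(univ.erase k) := by simp; omega
  obtain ⟨j, hj, hmin⟩ := (univ.erase k).exists_min_image x (card_pos.1 hcard)
  have hjk : j ≠ k := ne_of_mem_erase hj
  obtain ⟨i, -, hi⟩ := exists_mem_notMem_of_card_lt_card (s := {j, k}) (t := univ)
    (by simpa using (card_le_two : #{j, k} ≤ 2).trans_lt hn)
  simp only [mem_insert, mem_singleton, not_or] at hi
  have hxj : x j ≤ x i := hmin i (mem_erase.2 ⟨hi.2, mem_univ i⟩)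
  have hijk := hsum ▸ add_add_le_sum x hi.1 hi.2 hjk
  have hmid : ∀ l, l ≠ j → l ≠ k → Nat.lcm (w j) (w l) = d := fun l hlj hlk =>
    have := hsum ▸ add_add_le_sum x hlj hlk hjk
    lcm_eq_of_not_representable h hlj.symm (hwd j) (hwd l) (by omega) (by omega)
  have hdvd : Nat.lcm (w j) (w k) ∣ x j :=
    Nat.lcm_dvd (hwx j) (dvd_of_forall_lcm_eq hw hwx hsum (hwd k) hmid)
  have := Nat.le_of_dvd (hx j) hdvd
  have := lt_add_lcm_of_not_representable h hw hjk (hwd k)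
  omega

theorem exists_le_dotW_eq_of_representable {u : Fin n → ℕ} (hcap : ∀ i, w i * u i ≤ d)
    (h : Representable w (fun i => d - w i * u i) d) :
    ∃ v : Fin n → ℕ, (∀ i, v i ≤ u i) ∧ dotW w v = d := by
  obtain ⟨y, hy, hsum⟩ := h
  refine ⟨fun i => y i / w i, fun i => Nat.div_le_of_le_mul ?_, ?_⟩
  · have := (hy i).2
    dsimp only at this
    have := hcap i
    omega
  · rw [dotW, ← hsum]
    exact sum_congr rfl fun i _ => Nat.mul_div_cancel' (hy i).1

end Representable

theorem dvd_lcmW {n : ℕ} (w : Fin n → ℕ) (i : Fin n) : w i ∣ lcmW w :=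
  dvd_lcm (mem_univ i)

theorem IsBubble.mul_lt_lcmW {n : ℕ} {w u : Fin n → ℕ} (hu : IsBubble w u) (i : Fin n) :
    w i * u i < lcmW w := by
  by_contra! hle
  refine hu.2 ⟨Pi.single i (lcmW w / w i), fun j => ?_, ?_⟩
  · rcases eq_or_ne j i with rfl | hji
    · simpa using Nat.div_le_of_le_mul hle
    · simp [hji]
  · simp [dotW, Pi.single_apply, Nat.mul_div_cancel' (dvd_lcmW w i)]

theorem bubble_dot_le_of_dvd_general {n : ℕ} (w : Fin n → ℕ) (hw : ∀ i, 0 < w i)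
    (u : Fin n → ℕ) (hu : IsBubble w u) (hdvd : lcmW w ∣ dotW w u) :
    (dotW w u : ℤ) ≤ ((n : ℤ) - 2) * (lcmW w : ℤ) := by
  set d := lcmW w
  have hd : 0 < d := Nat.pos_of_ne_zero (Finset.lcm_ne_zero_iff.2 fun i _ => (hw i).ne')
  have hcap : ∀ i, w i * u i < d := hu.mul_lt_lcmW
  set x : Fin n → ℕ := fun i => d - w i * u i
  have hx : ∀ i, 0 < x i := fun i => Nat.sub_pos_of_lt (hcap i)
  have hsum : ∑ i, x i + dotW w u = n * d := by
    rw [dotW, ← sum_add_distrib, sum_congr rfl fun i _ => Nat.sub_add_cancel (hcap i).le]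
    simp
  have hn : 0 < n := Nat.pos_of_ne_zero (by rintro rfl; have := hu.1; simp at hsum; omega)
  have hx_pos : 0 < ∑ i, x i := sum_pos (fun i _ => hx i) (univ_nonempty_iff.2 ⟨⟨0, hn⟩⟩)
  have hx_ne : ∑ i, x i ≠ d := fun hx_sum => hu.2 <| exists_le_dotW_eq_of_representable
    (fun i => (hcap i).le) <| representable_of_sum_eq (by nlinarith [hu.1]) hw (dvd_lcmW w)
      (fun i => Nat.dvd_sub (dvd_lcmW w i) (dvd_mul_right _ _)) hx hx_sum
  obtain ⟨m, hm⟩ : d ∣ ∑ i, x i := (Nat.dvd_add_left hdvd).1 (hsum ▸ dvd_mul_left d n)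
  have hm2 : 2 ≤ m := by
    rcases m with _ | _ | m
    · simp [hm] at hx_pos
    · simp [hm] at hx_ne
    · omega
  zify at hsum hm hm2
  nlinarith

theorem bubble_dot_le_of_dvd {n : ℕ} (hn : 0 < n) (w : Fin n → ℕ) (hw : ∀ i, 0 < w i)
    (u : Fin n → ℕ) (hu : IsBubble w u) (hdvd : lcmW w ∣ dotW w u) :
    (dotW w u : ℤ) ≤ ((n : ℤ) - 2) * (lcmW w : ℤ) :=
  bubble_dot_le_of_dvd_general w hw u hu hdvd
end
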